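/- arXiv:2312.00602 — 3 statements merged into one kernel-verified Lean document; each statement's English description precedes it below -/
import Mathlib

section
/- For every integer k ≥ 0 and all complex numbers x_1,…,x_{2k}, one has ∑_{j=0}^{2k} (−1)^j s_j(x) s_{2k−j}(x) = s_k(v), where v = (2x_2, 2x_4, …, 2x_{2k}) is the sequence of doubled even-indexed entries. -/
/-!
With `S(z) = ∑ sₘ zᵐ` and `P(z) = ∑ xₖ zᵏ`, the recursion defining `schur` says `S' = P' S`,
i.e. `S = exp P`. Hence `S(-z) S(z) = exp (P(z) + P(-z))`, and `P(z) + P(-z) = V(z²)` with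
`V(z) = ∑ vᵢ zⁱ`, so `S(-z) S(z) = S_v(z²)`; the theorem compares the coefficients of `z^(2k)`.
Exponentials never appear: both sides solve `F' = (V(z²))' F` with `F(0) = 1`, and that
solution is unique.
-/

/-- Elementary Schur polynomials `s_m`, defined in any associative `ℂ`-algebra by the
generating-function recursion `m*s_m = ∑_{k=1}^m k*x_k*s_{m-k}`, which for commuting
arguments is equivalent to `exp(∑_{k≥1} x_k z^k) = ∑_{m≥0} s_m(x) z^m`.
The argument sequence is indexed so that `x (k+1)` is `x_{k+1}`; `x 0` is ignored. -/
noncomputable def schur {A : Type*} [Ring A] [Algebra ℂ A] (x : ℕ → A) : ℕ → A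
  | 0 => 1
  | m + 1 =>
      ((m + 1 : ℂ))⁻¹ • ∑ k ∈ Finset.range (m + 1), ((k + 1 : ℂ)) • (x (k + 1) * schur x (m - k))
  decreasing_by exact Nat.lt_succ_of_le (Nat.sub_le m k)

open PowerSeries

namespace PowerSeries

variable {R : Type*} [CommRing R]

theorem derivative_subst_eq_mul_of_derivative_eq_mul {f p g : R⟦X⟧} (hg : HasSubst g)
    (hf : d⁄dX R f = d⁄dX R p * f) :
    d⁄dX R (f.subst g) = d⁄dX R (p.subst g) * f.subst g := by
  rw [derivative_subst hg, derivative_subst hg, hf, subst_mul hg]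
  ring

theorem derivative_mul_eq_mul_of_derivative_eq_mul {f g p q : R⟦X⟧}
    (hf : d⁄dX R f = d⁄dX R p * f) (hg : d⁄dX R g = d⁄dX R q * g) :
    d⁄dX R (f * g) = d⁄dX R (p + q) * (f * g) := by
  rw [Derivation.leibniz, map_add, hf, hg, smul_eq_mul, smul_eq_mul]
  ring

theorem eq_of_derivative_eq_mul [IsAddTorsionFree R] {a f g : R⟦X⟧}
    (hf : d⁄dX R f = a * f) (hg : d⁄dX R g = a * g)
    (hc : constantCoeff f = constantCoeff g) (hu : IsUnit (constantCoeff g)) : f = g := by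
  obtain ⟨u, rfl⟩ := isUnit_iff_constantCoeff.mpr hu
  have hquot : f * ↑u⁻¹ = 1 := by
    refine derivative.ext ?_ ?_
    · rw [Derivation.leibniz, derivative_inv, hf, hg, derivative_one, smul_eq_mul, smul_eq_mul]
      linear_combination (-a * f * ↑u⁻¹) * u.mul_inv
    · rw [map_mul, hc, map_one, ← map_mul, Units.mul_inv, map_one]
  simpa using congrArg (· * (u : R⟦X⟧)) hquot

@[simp]
theorem constantCoeff_rescale (a : R) (f : R⟦X⟧) :
    constantCoeff (rescale a f) = constantCoeff f := by
  rw [← coeff_zero_eq_constantCoeff_apply, coeff_rescale, pow_zero, one_mul,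
    coeff_zero_eq_constantCoeff_apply]

theorem mk_add_rescale_neg_one (x : ℕ → R) :
    mk x + rescale (-1) (mk x) = expand 2 two_ne_zero (mk fun i => 2 * x (2 * i)) := by
  ext n
  rw [map_add, coeff_rescale, coeff_mk, coeff_expand]
  rcases Nat.even_or_odd' n with ⟨m, rfl | rfl⟩
  · simp [pow_mul]
    ring
  · simp [pow_succ, pow_mul]

end PowerSeries

theorem schur_succ {A : Type*} [Ring A] [Algebra ℂ A] (x : ℕ → A) (m : ℕ) :
    ((m + 1 : ℂ)) • schur x (m + 1) =
      ∑ k ∈ Finset.range (m + 1), ((k + 1 : ℂ)) • (x (k + 1) * schur x (m - k)) := by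
  rw [schur, smul_smul, mul_inv_cancel₀ (by exact_mod_cast m.succ_ne_zero), one_smul]

section SchurSeries

variable {A : Type*} [CommRing A] [Algebra ℂ A]

noncomputable def schurSeries (x : ℕ → A) : A⟦X⟧ := mk (schur x)

@[simp]
theorem constantCoeff_schurSeries (x : ℕ → A) : constantCoeff (schurSeries x) = 1 := by
  rw [← coeff_zero_eq_constantCoeff_apply, schurSeries, coeff_mk, schur]

theorem derivative_schurSeries (x : ℕ → A) :
    d⁄dX A (schurSeries x) = d⁄dX A (mk x) * schurSeries x := by
  ext n
  rw [coeff_derivative, coeff_mul, Finset.Nat.sum_antidiagonal_eq_sum_range_succ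
    (fun i j => coeff i (d⁄dX A (mk x)) * coeff j (schurSeries x))]
  have hrec := schur_succ x n
  simp only [Algebra.smul_def, map_add, map_natCast, map_one] at hrec
  simp only [schurSeries, coeff_derivative, coeff_mk]
  rw [mul_comm, hrec]
  exact Finset.sum_congr rfl fun k _ => by ring

end SchurSeries

/-- for every `k ≥ 0`,
`∑_{j=0}^{2k} (-1)^j s_j(x) s_{2k-j}(x) = s_k(v)` where `v_i = 2 x_{2i}`. -/
theorem schur_alternating_convolution_even (k : ℕ) (x : ℕ → ℂ) :
    ∑ j ∈ Finset.range (2 * k + 1), (-1 : ℂ) ^ j * schur x j * schur x (2 * k - j) =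
      schur (fun i => 2 * x (2 * i)) k := by
  set v : ℕ → ℂ := fun i => 2 * x (2 * i)
  have hneg : HasSubst ((-1 : ℂ) • X : ℂ⟦X⟧) := HasSubst.of_constantCoeff_zero' (by simp)
  have hprod : d⁄dX ℂ (rescale (-1) (schurSeries x) * schurSeries x) =
      d⁄dX ℂ (expand 2 two_ne_zero (mk v)) * (rescale (-1) (schurSeries x) * schurSeries x) := by
    rw [← mk_add_rescale_neg_one, add_comm]
    simp only [rescale_eq_subst]
    exact derivative_mul_eq_mul_of_derivative_eq_mul
      (derivative_subst_eq_mul_of_derivative_eq_mul hneg (derivative_schurSeries x))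
      (derivative_schurSeries x)
  have hexpand : d⁄dX ℂ (expand 2 two_ne_zero (schurSeries v)) =
      d⁄dX ℂ (expand 2 two_ne_zero (mk v)) * expand 2 two_ne_zero (schurSeries v) := by
    rw [expand_apply, expand_apply]
    exact derivative_subst_eq_mul_of_derivative_eq_mul (HasSubst.X_pow two_ne_zero)
      (derivative_schurSeries v)
  have hcoeff :=
    congrArg (coeff (2 * k)) (eq_of_derivative_eq_mul hprod hexpand (by simp) (by simp))
  rw [coeff_expand_mul, coeff_mul, Finset.Nat.sum_antidiagonal_eq_sum_range_succ
    (fun i j => coeff i (rescale (-1) (schurSeries x)) * coeff j (schurSeries x))] at hcoeff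
  simpa [schurSeries, coeff_rescale] using hcoeff
end

section
/- The only strict partition satisfying the −2 shift condition is the empty partition; i.e., no nonempty strict partition λ = (λ_1 > … > λ_k > 0) has the property that for every μ ∈ V_λ either μ − 2 ∈ V_λ or μ − 2 ≤ 0. -/
/-!
The elements of `V_λ` above `λ_1` are exactly the numbers `λ_1 + i + 1` with `i` a part, so the
`-n` shift condition forces `i - n` to be a part whenever the part `i` is at least `n`; descending,
`i % n` is a part. For `n = 2` and positive parts this makes `1` a part. But then
`λ_1 + 2 ∈ V_λ` while `λ_1 ∉ V_λ`, since `λ_1 = λ_1 - j + 1` only for `j = 1`.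
-/

/-- We encode a strict partition `λ = (λ_1 > λ_2 > ⋯ > λ_k > 0)` as the finite set
`S` of its (positive, distinct) parts; its largest part `λ_1` is `S.sup id`.
`VSet S` is the set `V_λ = {λ_1 + λ_i + 1 : 1 ≤ i ≤ k} ∪
{λ_1 - j + 1 : 0 < j < λ_1, j not a part of λ}`. -/
def VSet (S : Finset ℕ) : Set ℕ :=
  {μ | ∃ i ∈ S, μ = S.sup id + i + 1} ∪
    {μ | ∃ j : ℕ, 0 < j ∧ j < S.sup id ∧ j ∉ S ∧ μ = S.sup id - j + 1}

/-- The `-n` shift condition on a strict partition `λ` (encoded as the finite set `S` of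
its parts): for every `μ ∈ V_λ`, either `μ - n ∈ V_λ` or `μ - n ≤ 0`. -/
def ShiftCondition (n : ℕ) (S : Finset ℕ) : Prop :=
  ∀ μ ∈ VSet S, μ - n ∈ VSet S ∨ μ ≤ n

section

variable {S : Finset ℕ} {n i : ℕ}

theorem sup_add_succ_mem_VSet_iff : S.sup id + i + 1 ∈ VSet S ↔ i ∈ S := by
  refine ⟨?_, fun hi => Or.inl ⟨i, hi, rfl⟩⟩
  rintro (⟨k, hk, hik⟩ | ⟨j, hj, hjm, -, hij⟩)
  · rwa [show i = k by omega]
  · omega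

theorem sup_notMem_VSet_of_one_mem (h1 : 1 ∈ S) : S.sup id ∉ VSet S := by
  rintro (⟨k, -, hk⟩ | ⟨j, hj, hjm, hjS, hjμ⟩)
  · omega
  · exact hjS (by rwa [show j = 1 by omega])

namespace ShiftCondition

theorem sub_mem (h : ShiftCondition n S) (hi : i ∈ S) (hni : n ≤ i) : i - n ∈ S := by
  rcases h _ (sup_add_succ_mem_VSet_iff.mpr hi) with hmem | hle
  · rwa [show S.sup id + i + 1 - n = S.sup id + (i - n) + 1 by omega,
      sup_add_succ_mem_VSet_iff] at hmem
  · omega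

theorem mod_mem (h : ShiftCondition n S) (hi : i ∈ S) : i % n ∈ S := by
  induction i using Nat.strong_induction_on with
  | _ i ih =>
    rcases lt_or_ge i n with hin | hni
    · rwa [Nat.mod_eq_of_lt hin]
    · rcases n.eq_zero_or_pos with rfl | hn
      · rwa [Nat.mod_zero]
      · rw [Nat.mod_eq_sub_mod hni]
        exact ih _ (by omega) (h.sub_mem hi hni)

theorem one_notMem_of_two (h : ShiftCondition 2 S) : 1 ∉ S := by
  intro h1
  have hm : 1 ≤ S.sup id := Finset.le_sup (f := id) h1
  rcases h _ (sup_add_succ_mem_VSet_iff.mpr h1) with hmem | hle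
  · exact sup_notMem_VSet_of_one_mem h1 (by rwa [show S.sup id + 1 + 1 - 2 = S.sup id by omega]
      at hmem)
  · omega

end ShiftCondition

end

/-- no nonempty strict partition satisfies the `-2` shift condition. -/
theorem no_nonempty_strict_partition_shift_two (S : Finset ℕ) (hpos : ∀ x ∈ S, 0 < x)
    (hne : S.Nonempty) : ¬ ShiftCondition 2 S := by
  intro h
  obtain ⟨i, hi⟩ := hne
  have hmod : i % 2 ∈ S := h.mod_mem hi
  rcases Nat.mod_two_eq_zero_or_one i with h0 | h1
  · exact (hpos _ hmod).ne' h0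
  · exact h.one_notMem_of_two (h1 ▸ hmod)
end

section
/- Let τ : ℝ² → ℝ be a smooth, everywhere positive function of (x, s) satisfying the Hirota bilinear equation (D_x^6 + 9 D_x D_s) τ·τ = 0, i.e. τ ∂_x^6 τ − 6 ∂_x τ ∂_x^5 τ + 15 ∂_x^2 τ ∂_x^4 τ − 10 (∂_x^3 τ)^2 + 9 (τ ∂_x ∂_s τ − ∂_x τ ∂_s τ) = 0 on ℝ². Define u(x, t) = 2 ∂_x^2 (log τ)(x, 9t). Then u satisfies the Sawada-Kotera equation u_t + 15 (u u_{xxx} + u_x u_{xx} + 3 u^2 u_x) + u_{xxxxx} = 0 on ℝ². -/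
open Function

/-- Partial derivative in the first variable of a function `ℝ → ℝ → ℝ`. -/
noncomputable def px (f : ℝ → ℝ → ℝ) : ℝ → ℝ → ℝ := fun x s => deriv (fun y => f y s) x

/-- Partial derivative in the second variable of a function `ℝ → ℝ → ℝ`. -/
noncomputable def ps (f : ℝ → ℝ → ℝ) : ℝ → ℝ → ℝ := fun x s => deriv (fun y => f x y) s

private lemma px_iter (f : ℝ → ℝ → ℝ) (k : ℕ) (x s : ℝ) :
    px^[k] f x s = deriv^[k] (fun y => f y s) x := by
  induction k generalizing f with
  | zero => rfl
  | succ k ih => rw [Function.iterate_succ_apply, ih (px f)]; rfl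

private lemma contDiff_deriv1 {f : ℝ → ℝ} (hf : ContDiff ℝ (⊤:ℕ∞) f) :
    ContDiff ℝ (⊤:ℕ∞) (deriv f) := (contDiff_infty_iff_deriv.mp hf).2

private lemma hasDerivAt_cd {f : ℝ → ℝ} (hf : ContDiff ℝ (⊤:ℕ∞) f) (y : ℝ) :
    HasDerivAt f (deriv f y) y :=
  ((hf.differentiable (by simp)) y).hasDerivAt

private lemma contDiff_iter {f : ℝ → ℝ} (hf : ContDiff ℝ (⊤:ℕ∞) f) :
    ∀ k : ℕ, ContDiff ℝ (⊤:ℕ∞) (deriv^[k] f)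
  | 0 => hf
  | (k+1) => by
      rw [show deriv^[k+1] f = deriv (deriv^[k] f) from Function.iterate_succ_apply' deriv k f]
      exact contDiff_deriv1 (contDiff_iter hf k)

private lemma hdIter {f : ℝ → ℝ} (hf : ContDiff ℝ (⊤:ℕ∞) f) (k : ℕ) (y : ℝ) :
    HasDerivAt (deriv^[k] f) (deriv^[k+1] f y) y := by
  rw [show deriv^[k+1] f = deriv (deriv^[k] f) from Function.iterate_succ_apply' deriv k f]
  exact hasDerivAt_cd (contDiff_iter hf k) y

private lemma sliceX {f : ℝ → ℝ → ℝ} (hf : ContDiff ℝ (⊤:ℕ∞) (fun p : ℝ×ℝ => f p.1 p.2)) (s : ℝ) :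
    ContDiff ℝ (⊤:ℕ∞) (fun y => f y s) := hf.comp (contDiff_id.prodMk contDiff_const)

private lemma sliceS {f : ℝ → ℝ → ℝ} (hf : ContDiff ℝ (⊤:ℕ∞) (fun p : ℝ×ℝ => f p.1 p.2)) (x : ℝ) :
    ContDiff ℝ (⊤:ℕ∞) (fun b => f x b) := hf.comp (contDiff_const.prodMk contDiff_id)

private lemma px_fd {f : ℝ → ℝ → ℝ} (hf : ContDiff ℝ (⊤:ℕ∞) (fun p : ℝ×ℝ => f p.1 p.2)) (x s : ℝ) :
    HasDerivAt (fun y => f y s)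
      (fderiv ℝ (fun p : ℝ×ℝ => f p.1 p.2) (x,s) (1,0)) x :=
  by have h := ((hf.differentiable (by simp)) (x,s)).hasFDerivAt.comp_hasDerivAt x
      ((hasDerivAt_id x).prodMk (hasDerivAt_const x s)); exact h

private lemma ps_fd {f : ℝ → ℝ → ℝ} (hf : ContDiff ℝ (⊤:ℕ∞) (fun p : ℝ×ℝ => f p.1 p.2)) (x s : ℝ) :
    HasDerivAt (fun b => f x b)
      (fderiv ℝ (fun p : ℝ×ℝ => f p.1 p.2) (x,s) (0,1)) s :=
  ((hf.differentiable (by simp)) (x,s)).hasFDerivAt.comp_hasDerivAt s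
    ((hasDerivAt_const s x).prodMk (hasDerivAt_id s))

private lemma contDiff_px {f : ℝ → ℝ → ℝ} (hf : ContDiff ℝ (⊤:ℕ∞) (fun p : ℝ×ℝ => f p.1 p.2)) :
    ContDiff ℝ (⊤:ℕ∞) (fun p : ℝ×ℝ => px f p.1 p.2) := by
  have he : (fun p : ℝ×ℝ => px f p.1 p.2)
      = fun p : ℝ×ℝ => fderiv ℝ (fun q : ℝ×ℝ => f q.1 q.2) p ((1:ℝ),(0:ℝ)) := by
    funext p
    exact (px_fd hf p.1 p.2).deriv
  rw [he]
  exact (hf.fderiv_right (m := (⊤:ℕ∞)) (by exact_mod_cast le_top)).clm_apply contDiff_const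

private lemma contDiff_ps {f : ℝ → ℝ → ℝ} (hf : ContDiff ℝ (⊤:ℕ∞) (fun p : ℝ×ℝ => f p.1 p.2)) :
    ContDiff ℝ (⊤:ℕ∞) (fun p : ℝ×ℝ => ps f p.1 p.2) := by
  have he : (fun p : ℝ×ℝ => ps f p.1 p.2)
      = fun p : ℝ×ℝ => fderiv ℝ (fun q : ℝ×ℝ => f q.1 q.2) p ((0:ℝ),(1:ℝ)) := by
    funext p
    exact (ps_fd hf p.1 p.2).deriv
  rw [he]
  exact (hf.fderiv_right (m := (⊤:ℕ∞)) (by exact_mod_cast le_top)).clm_apply contDiff_const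

private lemma clairaut {f : ℝ → ℝ → ℝ} (hf : ContDiff ℝ (⊤:ℕ∞) (fun p : ℝ×ℝ => f p.1 p.2)) (x s : ℝ) :
    ps (px f) x s = px (ps f) x s := by
  set F : ℝ×ℝ → ℝ := fun p => f p.1 p.2 with hF
  have hdF : Differentiable ℝ (fderiv ℝ F) :=
    (hf.fderiv_right (m := (⊤:ℕ∞)) (by exact_mod_cast le_top)).differentiable
      (by simp)
  have hsymm := second_derivative_symmetric (f := F) (f' := fderiv ℝ F)
      (f'' := fderiv ℝ (fderiv ℝ F) (x,s))
      (fun y => ((hf.differentiable (by simp)) y).hasFDerivAt)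
      (hdF (x,s)).hasFDerivAt
  have h1 : ps (px f) x s = fderiv ℝ (fderiv ℝ F) (x,s) (0,1) (1,0) := by
    have hc : HasDerivAt (fun b => fderiv ℝ F (x,b)) (fderiv ℝ (fderiv ℝ F) (x,s) (0,1)) s :=
      (hdF (x,s)).hasFDerivAt.comp_hasDerivAt s ((hasDerivAt_const s x).prodMk (hasDerivAt_id s))
    have hap : HasDerivAt (fun b => fderiv ℝ F (x,b) ((1:ℝ),(0:ℝ)))
        (fderiv ℝ (fderiv ℝ F) (x,s) (0,1) (1,0)) s :=
      (ContinuousLinearMap.apply ℝ ℝ ((1:ℝ),(0:ℝ))).hasFDerivAt.comp_hasDerivAt s hc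
    have he : (fun b => px f x b) = fun b => fderiv ℝ F (x,b) ((1:ℝ),(0:ℝ)) := by
      funext b
      exact (px_fd hf x b).deriv
    show deriv (fun b => px f x b) s = _
    rw [he]
    exact hap.deriv
  have h2 : px (ps f) x s = fderiv ℝ (fderiv ℝ F) (x,s) (1,0) (0,1) := by
    have hc : HasDerivAt (fun y => fderiv ℝ F (y,s)) (fderiv ℝ (fderiv ℝ F) (x,s) (1,0)) x :=
      (hdF (x,s)).hasFDerivAt.comp_hasDerivAt x ((hasDerivAt_id x).prodMk (hasDerivAt_const x s))
    have hap : HasDerivAt (fun y => fderiv ℝ F (y,s) ((0:ℝ),(1:ℝ)))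
        (fderiv ℝ (fderiv ℝ F) (x,s) (1,0) (0,1)) x :=
      (ContinuousLinearMap.apply ℝ ℝ ((0:ℝ),(1:ℝ))).hasFDerivAt.comp_hasDerivAt x hc
    have he : (fun y => ps f y s) = fun y => fderiv ℝ F (y,s) ((0:ℝ),(1:ℝ)) := by
      funext y
      exact (ps_fd hf y s).deriv
    show deriv (fun y => ps f y s) x = _
    rw [he]
    exact hap.deriv
  rw [h1, h2, hsymm]

private lemma iter_cmul (c : ℝ) (f : ℝ → ℝ) (k : ℕ) :
    deriv^[k] (fun y => c * f y) = fun y => c * deriv^[k] f y := by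
  induction k generalizing f with
  | zero => rfl
  | succ k ih =>
      rw [Function.iterate_succ_apply, Function.iterate_succ_apply]
      rw [show deriv (fun y => c * f y) = fun y => c * deriv f y from
        funext fun y => deriv_const_mul_field c]
      exact ih (deriv f)

private lemma log_smooth (τ : ℝ → ℝ → ℝ) (hsmooth : ContDiff ℝ (⊤:ℕ∞) (fun p : ℝ×ℝ => τ p.1 p.2))
    (hpos : ∀ x s : ℝ, 0 < τ x s) :
    ContDiff ℝ (⊤:ℕ∞) (fun p : ℝ×ℝ => Real.log (τ p.1 p.2)) := by
  rw [contDiff_iff_contDiffAt]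
  intro p
  exact (Real.contDiffAt_log.mpr (hpos p.1 p.2).ne').comp p hsmooth.contDiffAt

/-- `k`-th x-derivative of `τ` at fixed `S`. -/
private noncomputable def Gk (τ : ℝ → ℝ → ℝ) (S : ℝ) (k : ℕ) : ℝ → ℝ :=
  deriv^[k] (fun y => τ y S)

/-- `k`-th x-derivative of `log τ` at fixed `S`. -/
private noncomputable def Fk (τ : ℝ → ℝ → ℝ) (S : ℝ) (k : ℕ) : ℝ → ℝ :=
  deriv^[k] (fun y => Real.log (τ y S))

/-- `k`-th x-derivative of `∂ₛ log τ` at fixed `S`. -/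
private noncomputable def Kk (τ : ℝ → ℝ → ℝ) (S : ℝ) (k : ℕ) : ℝ → ℝ :=
  deriv^[k] (fun y => ps (fun a b => Real.log (τ a b)) y S)

/-- `k`-th x-derivative of `∂ₛ τ` at fixed `S`. -/
private noncomputable def Hk (τ : ℝ → ℝ → ℝ) (S : ℝ) (k : ℕ) : ℝ → ℝ :=
  deriv^[k] (fun y => ps τ y S)

private lemma E6 (τ : ℝ → ℝ → ℝ)
    (hsmooth : ContDiff ℝ (⊤ : ℕ∞) (fun p : ℝ × ℝ => τ p.1 p.2))
    (hpos : ∀ x s : ℝ, 0 < τ x s)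
    (hHirota : ∀ x s : ℝ,
      τ x s * px^[6] τ x s - 6 * px τ x s * px^[5] τ x s
        + 15 * px^[2] τ x s * px^[4] τ x s - 10 * (px^[3] τ x s) ^ 2
        + 9 * (τ x s * px (ps τ) x s - px τ x s * ps τ x s) = 0) :
    ∀ X S : ℝ, Fk τ S 6 X + 30 * (Fk τ S 2 X * Fk τ S 4 X)
      + 60 * (Fk τ S 2 X * Fk τ S 2 X * Fk τ S 2 X) + 9 * Kk τ S 1 X = 0 := by
  intro X S
  have hg : ContDiff ℝ (⊤:ℕ∞) (fun y => τ y S) := sliceX hsmooth S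
  have hFs : ContDiff ℝ (⊤:ℕ∞) (fun y => Real.log (τ y S)) :=
    sliceX (f := fun a b => Real.log (τ a b)) (log_smooth τ hsmooth hpos) S
  have hK0s : ContDiff ℝ (⊤:ℕ∞) (Kk τ S 0) :=
    sliceX (contDiff_ps (log_smooth τ hsmooth hpos)) S
  have hdG0 : ∀ y : ℝ, HasDerivAt (fun z => τ z S) (Gk τ S 1 y) y := fun y => hdIter hg 0 y
  have hdK0 : ∀ y : ℝ, HasDerivAt (Kk τ S 0) (Kk τ S 1 y) y := fun y => hdIter hK0s 0 y
  have hdF1 : ∀ y : ℝ, HasDerivAt (Fk τ S 1) (Fk τ S 2 y) y := fun y => hdIter hFs 1 y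
  have hdF2 : ∀ y : ℝ, HasDerivAt (Fk τ S 2) (Fk τ S 3 y) y := fun y => hdIter hFs 2 y
  have hdF3 : ∀ y : ℝ, HasDerivAt (Fk τ S 3) (Fk τ S 4 y) y := fun y => hdIter hFs 3 y
  have hdF4 : ∀ y : ℝ, HasDerivAt (Fk τ S 4) (Fk τ S 5 y) y := fun y => hdIter hFs 4 y
  have hdF5 : ∀ y : ℝ, HasDerivAt (Fk τ S 5) (Fk τ S 6 y) y := fun y => hdIter hFs 5 y
  have e1 : ∀ y : ℝ, Gk τ S 1 y = Fk τ S 1 y * τ y S := by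
    intro y
    have h : Fk τ S 1 y = Gk τ S 1 y / τ y S := ((hdG0 y).log (hpos y S).ne').deriv
    rw [h]
    exact (div_mul_cancel₀ _ (hpos y S).ne').symm
  have e2 : ∀ y : ℝ, Gk τ S 2 y = (Fk τ S 2 y + Fk τ S 1 y * Fk τ S 1 y) * τ y S := by
    intro y
    have hB : HasDerivAt (fun z => (Fk τ S 1 z) * τ z S)
        (Fk τ S 2 y * τ y S + (Fk τ S 1 y) * Gk τ S 1 y) y := (hdF1 y).mul (hdG0 y)
    have h : Gk τ S 2 y = Fk τ S 2 y * τ y S + (Fk τ S 1 y) * Gk τ S 1 y := by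
      have hstep : Gk τ S 2 y = deriv (fun z => (Fk τ S 1 z) * τ z S) y := by
        rw [show Gk τ S 2 = deriv (Gk τ S 1) from
              Function.iterate_succ_apply' deriv 1 (fun w => τ w S),
            show Gk τ S 1 = (fun z => (Fk τ S 1 z) * τ z S) from funext e1]
      rw [hstep]
      exact hB.deriv
    rw [h, e1 y]
    ring
  have e3 : ∀ y : ℝ, Gk τ S 3 y = (Fk τ S 3 y + 3 * Fk τ S 1 y * Fk τ S 2 y + Fk τ S 1 y * Fk τ S 1 y * Fk τ S 1 y) * τ y S := by
    intro y
    have hB : HasDerivAt (fun z => (Fk τ S 2 z + Fk τ S 1 z * Fk τ S 1 z) * τ z S)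
        ((Fk τ S 3 y + (Fk τ S 2 y * Fk τ S 1 y + Fk τ S 1 y * Fk τ S 2 y)) * τ y S + (Fk τ S 2 y + Fk τ S 1 y * Fk τ S 1 y) * Gk τ S 1 y) y := ((hdF2 y).add ((hdF1 y).mul (hdF1 y))).mul (hdG0 y)
    have h : Gk τ S 3 y = (Fk τ S 3 y + (Fk τ S 2 y * Fk τ S 1 y + Fk τ S 1 y * Fk τ S 2 y)) * τ y S + (Fk τ S 2 y + Fk τ S 1 y * Fk τ S 1 y) * Gk τ S 1 y := by
      have hstep : Gk τ S 3 y = deriv (fun z => (Fk τ S 2 z + Fk τ S 1 z * Fk τ S 1 z) * τ z S) y := by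
        rw [show Gk τ S 3 = deriv (Gk τ S 2) from
              Function.iterate_succ_apply' deriv 2 (fun w => τ w S),
            show Gk τ S 2 = (fun z => (Fk τ S 2 z + Fk τ S 1 z * Fk τ S 1 z) * τ z S) from funext e2]
      rw [hstep]
      exact hB.deriv
    rw [h, e1 y]
    ring
  have e4 : ∀ y : ℝ, Gk τ S 4 y = (Fk τ S 4 y + 3 * Fk τ S 2 y * Fk τ S 2 y + 4 * Fk τ S 1 y * Fk τ S 3 y + 6 * Fk τ S 1 y * Fk τ S 1 y * Fk τ S 2 y + Fk τ S 1 y * Fk τ S 1 y * Fk τ S 1 y * Fk τ S 1 y) * τ y S := by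
    intro y
    have hB : HasDerivAt (fun z => (Fk τ S 3 z + 3 * Fk τ S 1 z * Fk τ S 2 z + Fk τ S 1 z * Fk τ S 1 z * Fk τ S 1 z) * τ z S)
        (((Fk τ S 4 y + ((0 * Fk τ S 1 y + 3 * Fk τ S 2 y) * Fk τ S 2 y + (3 * Fk τ S 1 y) * Fk τ S 3 y)) + ((Fk τ S 2 y * Fk τ S 1 y + Fk τ S 1 y * Fk τ S 2 y) * Fk τ S 1 y + (Fk τ S 1 y * Fk τ S 1 y) * Fk τ S 2 y)) * τ y S + (Fk τ S 3 y + 3 * Fk τ S 1 y * Fk τ S 2 y + Fk τ S 1 y * Fk τ S 1 y * Fk τ S 1 y) * Gk τ S 1 y) y := (((hdF3 y).add (((hasDerivAt_const y (3:ℝ)).mul (hdF1 y)).mul (hdF2 y))).add (((hdF1 y).mul (hdF1 y)).mul (hdF1 y))).mul (hdG0 y)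
    have h : Gk τ S 4 y = ((Fk τ S 4 y + ((0 * Fk τ S 1 y + 3 * Fk τ S 2 y) * Fk τ S 2 y + (3 * Fk τ S 1 y) * Fk τ S 3 y)) + ((Fk τ S 2 y * Fk τ S 1 y + Fk τ S 1 y * Fk τ S 2 y) * Fk τ S 1 y + (Fk τ S 1 y * Fk τ S 1 y) * Fk τ S 2 y)) * τ y S + (Fk τ S 3 y + 3 * Fk τ S 1 y * Fk τ S 2 y + Fk τ S 1 y * Fk τ S 1 y * Fk τ S 1 y) * Gk τ S 1 y := by
      have hstep : Gk τ S 4 y = deriv (fun z => (Fk τ S 3 z + 3 * Fk τ S 1 z * Fk τ S 2 z + Fk τ S 1 z * Fk τ S 1 z * Fk τ S 1 z) * τ z S) y := by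
        rw [show Gk τ S 4 = deriv (Gk τ S 3) from
              Function.iterate_succ_apply' deriv 3 (fun w => τ w S),
            show Gk τ S 3 = (fun z => (Fk τ S 3 z + 3 * Fk τ S 1 z * Fk τ S 2 z + Fk τ S 1 z * Fk τ S 1 z * Fk τ S 1 z) * τ z S) from funext e3]
      rw [hstep]
      exact hB.deriv
    rw [h, e1 y]
    ring
  have e5 : ∀ y : ℝ, Gk τ S 5 y = (Fk τ S 5 y + 10 * Fk τ S 2 y * Fk τ S 3 y + 5 * Fk τ S 1 y * Fk τ S 4 y + 15 * Fk τ S 1 y * Fk τ S 2 y * Fk τ S 2 y + 10 * Fk τ S 1 y * Fk τ S 1 y * Fk τ S 3 y + 10 * Fk τ S 1 y * Fk τ S 1 y * Fk τ S 1 y * Fk τ S 2 y + Fk τ S 1 y * Fk τ S 1 y * Fk τ S 1 y * Fk τ S 1 y * Fk τ S 1 y) * τ y S := by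
    intro y
    have hB : HasDerivAt (fun z => (Fk τ S 4 z + 3 * Fk τ S 2 z * Fk τ S 2 z + 4 * Fk τ S 1 z * Fk τ S 3 z + 6 * Fk τ S 1 z * Fk τ S 1 z * Fk τ S 2 z + Fk τ S 1 z * Fk τ S 1 z * Fk τ S 1 z * Fk τ S 1 z) * τ z S)
        (((((Fk τ S 5 y + ((0 * Fk τ S 2 y + 3 * Fk τ S 3 y) * Fk τ S 2 y + (3 * Fk τ S 2 y) * Fk τ S 3 y)) + ((0 * Fk τ S 1 y + 4 * Fk τ S 2 y) * Fk τ S 3 y + (4 * Fk τ S 1 y) * Fk τ S 4 y)) + (((0 * Fk τ S 1 y + 6 * Fk τ S 2 y) * Fk τ S 1 y + (6 * Fk τ S 1 y) * Fk τ S 2 y) * Fk τ S 2 y + ((6 * Fk τ S 1 y) * Fk τ S 1 y) * Fk τ S 3 y)) + (((Fk τ S 2 y * Fk τ S 1 y + Fk τ S 1 y * Fk τ S 2 y) * Fk τ S 1 y + (Fk τ S 1 y * Fk τ S 1 y) * Fk τ S 2 y) * Fk τ S 1 y + ((Fk τ S 1 y * Fk τ S 1 y) * Fk τ S 1 y) *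 Fk τ S 2 y)) * τ y S + (Fk τ S 4 y + 3 * Fk τ S 2 y * Fk τ S 2 y + 4 * Fk τ S 1 y * Fk τ S 3 y + 6 * Fk τ S 1 y * Fk τ S 1 y * Fk τ S 2 y + Fk τ S 1 y * Fk τ S 1 y * Fk τ S 1 y * Fk τ S 1 y) * Gk τ S 1 y) y := (((((hdF4 y).add (((hasDerivAt_const y (3:ℝ)).mul (hdF2 y)).mul (hdF2 y))).add (((hasDerivAt_const y (4:ℝ)).mul (hdF1 y)).mul (hdF3 y))).add ((((hasDerivAt_const y (6:ℝ)).mul (hdF1 y)).mul (hdF1 y)).mul (hdF2 y))).add ((((hdF1 y).mul (hdF1 y)).mul (hdF1 y)).mul (hdF1 y))).mul (hdG0 y)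
    have h : Gk τ S 5 y = ((((Fk τ S 5 y + ((0 * Fk τ S 2 y + 3 * Fk τ S 3 y) * Fk τ S 2 y + (3 * Fk τ S 2 y) * Fk τ S 3 y)) + ((0 * Fk τ S 1 y + 4 * Fk τ S 2 y) * Fk τ S 3 y + (4 * Fk τ S 1 y) * Fk τ S 4 y)) + (((0 * Fk τ S 1 y + 6 * Fk τ S 2 y) * Fk τ S 1 y + (6 * Fk τ S 1 y) * Fk τ S 2 y) * Fk τ S 2 y + ((6 * Fk τ S 1 y) * Fk τ S 1 y) * Fk τ S 3 y)) + (((Fk τ S 2 y * Fk τ S 1 y + Fk τ S 1 y * Fk τ S 2 y) * Fk τ S 1 y + (Fk τ S 1 y * Fk τ S 1 y) * Fk τ S 2 y) * Fk τ S 1 y + ((Fk τ S 1 y * Fk τ S 1 y) * Fk τ S 1 y) * Fk τ S 2 y)) * τ y S + (Fk τ S 4 y + 3 * Fk τ S 2 y * Fk τ S 2 y + 4 * Fk τ S 1 y * Fk τ S 3 y + 6 * Fk τ S 1 y * Fk τ S 1 y * Fk τ S 2 y + Fk τ S 1 y * Fk τ S 1 y * Fk τ S 1 y * Fk τ S 1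 y) * Gk τ S 1 y := by
      have hstep : Gk τ S 5 y = deriv (fun z => (Fk τ S 4 z + 3 * Fk τ S 2 z * Fk τ S 2 z + 4 * Fk τ S 1 z * Fk τ S 3 z + 6 * Fk τ S 1 z * Fk τ S 1 z * Fk τ S 2 z + Fk τ S 1 z * Fk τ S 1 z * Fk τ S 1 z * Fk τ S 1 z) * τ z S) y := by
        rw [show Gk τ S 5 = deriv (Gk τ S 4) from
              Function.iterate_succ_apply' deriv 4 (fun w => τ w S),
            show Gk τ S 4 = (fun z => (Fk τ S 4 z + 3 * Fk τ S 2 z * Fk τ S 2 z + 4 * Fk τ S 1 z * Fk τ S 3 z + 6 * Fk τ S 1 z * Fk τ S 1 z * Fk τ S 2 z + Fk τ S 1 z * Fk τ S 1 z * Fk τ S 1 z * Fk τ S 1 z) * τ z S) from funext e4]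
      rw [hstep]
      exact hB.deriv
    rw [h, e1 y]
    ring
  have e6 : ∀ y : ℝ, Gk τ S 6 y = (Fk τ S 6 y + 10 * Fk τ S 3 y * Fk τ S 3 y + 15 * Fk τ S 2 y * Fk τ S 4 y + 15 * Fk τ S 2 y * Fk τ S 2 y * Fk τ S 2 y + 6 * Fk τ S 1 y * Fk τ S 5 y + 60 * Fk τ S 1 y * Fk τ S 2 y * Fk τ S 3 y + 15 * Fk τ S 1 y * Fk τ S 1 y * Fk τ S 4 y + 45 * Fk τ S 1 y * Fk τ S 1 y * Fk τ S 2 y * Fk τ S 2 y + 20 * Fk τ S 1 y * Fk τ S 1 y * Fk τ S 1 y * Fk τ S 3 y + 15 * Fk τ S 1 y * Fk τ S 1 y * Fk τ S 1 y * Fk τ S 1 y * Fk τ S 2 y + Fk τ S 1 y * Fk τ S 1 y * Fk τ S 1 y * Fk τ S 1 y * Fk τ S 1 y * Fk τ S 1 y) * τ y S := by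
    intro y
    have hB : HasDerivAt (fun z => (Fk τ S 5 z + 10 * Fk τ S 2 z * Fk τ S 3 z + 5 * Fk τ S 1 z * Fk τ S 4 z + 15 * Fk τ S 1 z * Fk τ S 2 z * Fk τ S 2 z + 10 * Fk τ S 1 z * Fk τ S 1 z * Fk τ S 3 z + 10 * Fk τ S 1 z * Fk τ S 1 z * Fk τ S 1 z * Fk τ S 2 z + Fk τ S 1 z * Fk τ S 1 z * Fk τ S 1 z * Fk τ S 1 z * Fk τ S 1 z) * τ z S)
        (((((((Fk τ S 6 y + ((0 * Fk τ S 2 y + 10 * Fk τ S 3 y) * Fk τ S 3 y + (10 * Fk τ S 2 y) * Fk τ S 4 y)) + ((0 * Fk τ S 1 y + 5 * Fk τ S 2 y) * Fk τ S 4 y + (5 * Fk τ S 1 y) * Fk τ S 5 y)) + (((0 * Fk τ S 1 y + 15 * Fk τ S 2 y) * Fk τ S 2 y + (15 * Fk τ S 1 y) * Fk τ S 3 y) * Fk τ S 2 y + ((15 * Fk τ S 1 y) * Fk τ S 2 y) * Fk τ S 3 y)) + (((0 * Fk τ S 1 y + 10 * Fk τ S 2 y) * Fk τ S 1 y + (10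 * Fk τ S 1 y) * Fk τ S 2 y) * Fk τ S 3 y + ((10 * Fk τ S 1 y) * Fk τ S 1 y) * Fk τ S 4 y)) + ((((0 * Fk τ S 1 y + 10 * Fk τ S 2 y) * Fk τ S 1 y + (10 * Fk τ S 1 y) * Fk τ S 2 y) * Fk τ S 1 y + ((10 * Fk τ S 1 y) * Fk τ S 1 y) * Fk τ S 2 y) * Fk τ S 2 y + (((10 * Fk τ S 1 y) * Fk τ S 1 y) * Fk τ S 1 y) * Fk τ S 3 y)) + ((((Fk τ S 2 y * Fk τ S 1 y + Fk τ S 1 y * Fk τ S 2 y) * Fk τ S 1 y + (Fk τ S 1 y * Fk τ S 1 y) * Fk τ S 2 y) * Fk τ S 1 y + ((Fk τ S 1 y * Fk τ S 1 y) * Fk τ S 1 y) * Fk τ S 2 y) * Fk τ S 1 y + (((Fk τ S 1 y * Fk τ S 1 y) * Fk τ S 1 y) * Fk τ S 1 y) * Fk τ S 2 y)) * τ y S + (Fk τ S 5 y + 10 * Fk τ S 2 y * Fk τ S 3 y + 5 * Fk τ S 1 y * Fk τ S 4 y + 15 * Fk τ S 1 y * Fk τ S 2 y * Fk τ S 2 y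 + 10 * Fk τ S 1 y * Fk τ S 1 y * Fk τ S 3 y + 10 * Fk τ S 1 y * Fk τ S 1 y * Fk τ S 1 y * Fk τ S 2 y + Fk τ S 1 y * Fk τ S 1 y * Fk τ S 1 y * Fk τ S 1 y * Fk τ S 1 y) * Gk τ S 1 y) y := (((((((hdF5 y).add (((hasDerivAt_const y (10:ℝ)).mul (hdF2 y)).mul (hdF3 y))).add (((hasDerivAt_const y (5:ℝ)).mul (hdF1 y)).mul (hdF4 y))).add ((((hasDerivAt_const y (15:ℝ)).mul (hdF1 y)).mul (hdF2 y)).mul (hdF2 y))).add ((((hasDerivAt_const y (10:ℝ)).mul (hdF1 y)).mul (hdF1 y)).mul (hdF3 y))).add (((((hasDerivAt_const y (10:ℝ)).mul (hdF1 y)).mul (hdF1 y)).mul (hdF1 y)).mul (hdF2 y))).add (((((hdF1 y).mul (hdF1 y)).mul (hdF1 y)).mul (hdF1 y)).mul (hdF1 y))).mul (hdG0 y)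
    have h : Gk τ S 6 y = ((((((Fk τ S 6 y + ((0 * Fk τ S 2 y + 10 * Fk τ S 3 y) * Fk τ S 3 y + (10 * Fk τ S 2 y) * Fk τ S 4 y)) + ((0 * Fk τ S 1 y + 5 * Fk τ S 2 y) * Fk τ S 4 y + (5 * Fk τ S 1 y) * Fk τ S 5 y)) + (((0 * Fk τ S 1 y + 15 * Fk τ S 2 y) * Fk τ S 2 y + (15 * Fk τ S 1 y) * Fk τ S 3 y) * Fk τ S 2 y + ((15 * Fk τ S 1 y) * Fk τ S 2 y) * Fk τ S 3 y)) + (((0 * Fk τ S 1 y + 10 * Fk τ S 2 y) * Fk τ S 1 y + (10 * Fk τ S 1 y) * Fk τ S 2 y) * Fk τ S 3 y + ((10 * Fk τ S 1 y) * Fk τ S 1 y) * Fk τ S 4 y)) + ((((0 * Fk τ S 1 y + 10 * Fk τ S 2 y) * Fk τ S 1 y + (10 * Fk τ S 1 y) * Fk τ S 2 y) * Fk τ S 1 y + ((10 * Fk τ S 1 y) * Fk τ S 1 y) * Fk τ S 2 y) * Fk τ S 2 y + (((10 * Fk τ S 1 y) * Fk τ S 1 y) * Fk τ S 1 y) * Fk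 τ S 3 y)) + ((((Fk τ S 2 y * Fk τ S 1 y + Fk τ S 1 y * Fk τ S 2 y) * Fk τ S 1 y + (Fk τ S 1 y * Fk τ S 1 y) * Fk τ S 2 y) * Fk τ S 1 y + ((Fk τ S 1 y * Fk τ S 1 y) * Fk τ S 1 y) * Fk τ S 2 y) * Fk τ S 1 y + (((Fk τ S 1 y * Fk τ S 1 y) * Fk τ S 1 y) * Fk τ S 1 y) * Fk τ S 2 y)) * τ y S + (Fk τ S 5 y + 10 * Fk τ S 2 y * Fk τ S 3 y + 5 * Fk τ S 1 y * Fk τ S 4 y + 15 * Fk τ S 1 y * Fk τ S 2 y * Fk τ S 2 y + 10 * Fk τ S 1 y * Fk τ S 1 y * Fk τ S 3 y + 10 * Fk τ S 1 y * Fk τ S 1 y * Fk τ S 1 y * Fk τ S 2 y + Fk τ S 1 y * Fk τ S 1 y * Fk τ S 1 y * Fk τ S 1 y * Fk τ S 1 y) * Gk τ S 1 y := by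
      have hstep : Gk τ S 6 y = deriv (fun z => (Fk τ S 5 z + 10 * Fk τ S 2 z * Fk τ S 3 z + 5 * Fk τ S 1 z * Fk τ S 4 z + 15 * Fk τ S 1 z * Fk τ S 2 z * Fk τ S 2 z + 10 * Fk τ S 1 z * Fk τ S 1 z * Fk τ S 3 z + 10 * Fk τ S 1 z * Fk τ S 1 z * Fk τ S 1 z * Fk τ S 2 z + Fk τ S 1 z * Fk τ S 1 z * Fk τ S 1 z * Fk τ S 1 z * Fk τ S 1 z) * τ z S) y := by
        rw [show Gk τ S 6 = deriv (Gk τ S 5) from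
              Function.iterate_succ_apply' deriv 5 (fun w => τ w S),
            show Gk τ S 5 = (fun z => (Fk τ S 5 z + 10 * Fk τ S 2 z * Fk τ S 3 z + 5 * Fk τ S 1 z * Fk τ S 4 z + 15 * Fk τ S 1 z * Fk τ S 2 z * Fk τ S 2 z + 10 * Fk τ S 1 z * Fk τ S 1 z * Fk τ S 3 z + 10 * Fk τ S 1 z * Fk τ S 1 z * Fk τ S 1 z * Fk τ S 2 z + Fk τ S 1 z * Fk τ S 1 z * Fk τ S 1 z * Fk τ S 1 z * Fk τ S 1 z) * τ z S) from funext e5]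
      rw [hstep]
      exact hB.deriv
    rw [h, e1 y]
    ring
  have m0 : ∀ y : ℝ, ps τ y S = Kk τ S 0 y * τ y S := by
    intro y
    have hd0 : HasDerivAt (fun b => τ y b) (ps τ y S) S := hasDerivAt_cd (sliceS hsmooth y) S
    have h : Kk τ S 0 y = ps τ y S / τ y S := (hd0.log (hpos y S).ne').deriv
    rw [h]
    exact (div_mul_cancel₀ _ (hpos y S).ne').symm
  have m1 : ∀ y : ℝ, Hk τ S 1 y = (Kk τ S 1 y + Kk τ S 0 y * Fk τ S 1 y) * τ y S := by
    intro y
    have hB : HasDerivAt (fun z => Kk τ S 0 z * τ z S)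
        (Kk τ S 1 y * τ y S + Kk τ S 0 y * Gk τ S 1 y) y := (hdK0 y).mul (hdG0 y)
    have h : Hk τ S 1 y = Kk τ S 1 y * τ y S + Kk τ S 0 y * Gk τ S 1 y := by
      have hstep : Hk τ S 1 y = deriv (fun z => Kk τ S 0 z * τ z S) y := by
        rw [show Hk τ S 1 = deriv (Hk τ S 0) from
              Function.iterate_succ_apply' deriv 0 (fun w => ps τ w S),
            show Hk τ S 0 = (fun z => Kk τ S 0 z * τ z S) from funext m0]
      rw [hstep]
      exact hB.deriv
    rw [h, e1 y]
    ring
  have hH' : τ X S * Gk τ S 6 X - 6 * Gk τ S 1 X * Gk τ S 5 X + 15 * Gk τ S 2 X * Gk τ S 4 X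
      - 10 * (Gk τ S 3 X)^2 + 9 * (τ X S * Hk τ S 1 X - Gk τ S 1 X * ps τ X S) = 0 :=
    hHirota X S
  rw [e6 X, e5 X, e4 X, e3 X, e2 X, e1 X, m1 X, m0 X] at hH'
  have h2 : (τ X S)^2 * (Fk τ S 6 X + 30 * (Fk τ S 2 X * Fk τ S 4 X)
      + 60 * (Fk τ S 2 X * Fk τ S 2 X * Fk τ S 2 X) + 9 * Kk τ S 1 X) = 0 := by
    linear_combination hH'
  exact (mul_eq_zero.mp h2).resolve_left (pow_ne_zero 2 (hpos X S).ne')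

private lemma E7 (τ : ℝ → ℝ → ℝ)
    (hsmooth : ContDiff ℝ (⊤ : ℕ∞) (fun p : ℝ × ℝ => τ p.1 p.2))
    (hpos : ∀ x s : ℝ, 0 < τ x s)
    (hHirota : ∀ x s : ℝ,
      τ x s * px^[6] τ x s - 6 * px τ x s * px^[5] τ x s
        + 15 * px^[2] τ x s * px^[4] τ x s - 10 * (px^[3] τ x s) ^ 2
        + 9 * (τ x s * px (ps τ) x s - px τ x s * ps τ x s) = 0) :
    ∀ X S : ℝ, Fk τ S 7 X + 30 * (Fk τ S 3 X * Fk τ S 4 X) + 30 * (Fk τ S 2 X * Fk τ S 5 X)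
      + 180 * (Fk τ S 2 X * Fk τ S 2 X * Fk τ S 3 X) + 9 * Kk τ S 2 X = 0 := by
  intro X S
  have hFs : ContDiff ℝ (⊤:ℕ∞) (fun y => Real.log (τ y S)) :=
    sliceX (f := fun a b => Real.log (τ a b)) (log_smooth τ hsmooth hpos) S
  have hK0s : ContDiff ℝ (⊤:ℕ∞) (Kk τ S 0) :=
    sliceX (contDiff_ps (log_smooth τ hsmooth hpos)) S
  have hdF2 : HasDerivAt (Fk τ S 2) (Fk τ S 3 X) X := hdIter hFs 2 X
  have hdF4 : HasDerivAt (Fk τ S 4) (Fk τ S 5 X) X := hdIter hFs 4 X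
  have hdF6 : HasDerivAt (Fk τ S 6) (Fk τ S 7 X) X := hdIter hFs 6 X
  have hdK1 : HasDerivAt (Kk τ S 1) (Kk τ S 2 X) X := hdIter hK0s 1 X
  have htree : HasDerivAt
      (fun Z => Fk τ S 6 Z + 30 * (Fk τ S 2 Z * Fk τ S 4 Z)
        + 60 * (Fk τ S 2 Z * Fk τ S 2 Z * Fk τ S 2 Z) + 9 * Kk τ S 1 Z)
      (Fk τ S 7 X
        + (0 * (Fk τ S 2 X * Fk τ S 4 X)
            + 30 * (Fk τ S 3 X * Fk τ S 4 X + Fk τ S 2 X * Fk τ S 5 X))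
        + (0 * (Fk τ S 2 X * Fk τ S 2 X * Fk τ S 2 X)
            + 60 * ((Fk τ S 3 X * Fk τ S 2 X + Fk τ S 2 X * Fk τ S 3 X) * Fk τ S 2 X
              + Fk τ S 2 X * Fk τ S 2 X * Fk τ S 3 X))
        + (0 * Kk τ S 1 X + 9 * Kk τ S 2 X)) X :=
    ((hdF6.add ((hasDerivAt_const X (30:ℝ)).mul (hdF2.mul hdF4))).add
      ((hasDerivAt_const X (60:ℝ)).mul ((hdF2.mul hdF2).mul hdF2))).add
      ((hasDerivAt_const X (9:ℝ)).mul hdK1)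
  have h1 := htree.deriv
  rw [show (fun Z => Fk τ S 6 Z + 30 * (Fk τ S 2 Z * Fk τ S 4 Z)
        + 60 * (Fk τ S 2 Z * Fk τ S 2 Z * Fk τ S 2 Z) + 9 * Kk τ S 1 Z) = (fun _ => (0:ℝ))
      from funext fun Z => E6 τ hsmooth hpos hHirota Z S, deriv_const] at h1
  linear_combination -h1

/-- if `τ : ℝ² → ℝ` is smooth and everywhere positive and satisfies the
Hirota bilinear equation `(D_x⁶ + 9 D_x D_s) τ·τ = 0`, i.e.
`τ ∂_x⁶τ - 6 ∂_xτ ∂_x⁵τ + 15 ∂_x²τ ∂_x⁴τ - 10 (∂_x³τ)² + 9 (τ ∂_x∂_sτ - ∂_xτ ∂_sτ) = 0`,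
then `u(x,t) = 2 ∂_x²(log τ)(x, 9t)` satisfies the Sawada-Kotera equation
`u_t + 15 (u u_{xxx} + u_x u_{xx} + 3 u² u_x) + u_{xxxxx} = 0` on `ℝ²`. -/
theorem sawada_kotera_from_hirota (τ : ℝ → ℝ → ℝ)
    (hsmooth : ContDiff ℝ (⊤ : ℕ∞) (fun p : ℝ × ℝ => τ p.1 p.2))
    (hpos : ∀ x s : ℝ, 0 < τ x s)
    (hHirota : ∀ x s : ℝ,
      τ x s * px^[6] τ x s - 6 * px τ x s * px^[5] τ x s
        + 15 * px^[2] τ x s * px^[4] τ x s - 10 * (px^[3] τ x s) ^ 2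
        + 9 * (τ x s * px (ps τ) x s - px τ x s * ps τ x s) = 0)
    (u : ℝ → ℝ → ℝ)
    (hu : ∀ x t : ℝ, u x t = 2 * px^[2] (fun a b => Real.log (τ a b)) x (9 * t)) :
    ∀ x t : ℝ,
      ps u x t
        + 15 * (u x t * px^[3] u x t + px u x t * px^[2] u x t
            + 3 * (u x t) ^ 2 * px u x t)
        + px^[5] u x t = 0 := by
  intro x t
  have hufun : (fun y => u y t) = fun y => 2 * Fk τ (9*t) 2 y :=
    funext fun y => (hu y t).trans rfl
  have hu0 : u x t = 2 * Fk τ (9*t) 2 x := (hu x t).trans rfl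
  have hu1 : px u x t = 2 * Fk τ (9*t) 3 x := by
    show deriv (fun y => u y t) x = _
    rw [hufun, deriv_const_mul_field]
    rfl
  have hu2 : px^[2] u x t = 2 * Fk τ (9*t) 4 x := by
    rw [px_iter u 2 x t, hufun, iter_cmul]
    rfl
  have hu3 : px^[3] u x t = 2 * Fk τ (9*t) 5 x := by
    rw [px_iter u 3 x t, hufun, iter_cmul]
    rfl
  have hu5 : px^[5] u x t = 2 * Fk τ (9*t) 7 x := by
    rw [px_iter u 5 x t, hufun, iter_cmul]
    rfl
  have hWs : ContDiff ℝ (⊤:ℕ∞)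
      (fun p : ℝ×ℝ => px (px (fun a b => Real.log (τ a b))) p.1 p.2) :=
    contDiff_px (contDiff_px (log_smooth τ hsmooth hpos))
  have hder : HasDerivAt (fun b => px (px (fun a b => Real.log (τ a b))) x b)
      (ps (px (px (fun a b => Real.log (τ a b)))) x (9*t)) (9*t) :=
    hasDerivAt_cd (sliceS hWs x) (9*t)
  have hin : HasDerivAt (fun b : ℝ => 9*b) ((9:ℝ)*1) t := (hasDerivAt_id t).const_mul 9
  have hchain : HasDerivAt (fun b => px (px (fun a b => Real.log (τ a b))) x (9*b))
      (ps (px (px (fun a b => Real.log (τ a b)))) x (9*t) * (9*1)) t := hder.comp t hin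
  have hufun2 : (fun b => u x b)
      = fun b => 2 * px (px (fun a b => Real.log (τ a b))) x (9*b) :=
    funext fun b => (hu x b).trans rfl
  have hc : ps (px (px (fun a b => Real.log (τ a b)))) x (9*t) = Kk τ (9*t) 2 x := by
    rw [clairaut (contDiff_px (log_smooth τ hsmooth hpos)) x (9*t),
        show ps (px (fun a b => Real.log (τ a b))) = px (ps (fun a b => Real.log (τ a b))) from
          funext fun a => funext fun b => clairaut (log_smooth τ hsmooth hpos) a b]
    rfl
  have hpsu : ps u x t = 2 * (Kk τ (9*t) 2 x * (9*1)) := by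
    show deriv (fun b => u x b) t = _
    rw [hufun2, deriv_const_mul_field, hchain.deriv, hc]
  rw [hpsu, hu0, hu1, hu2, hu3, hu5]
  linear_combination 2 * E7 τ hsmooth hpos hHirota x (9*t)
end
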